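/- If x₀ is a balanced dyadic rational of order m, then the image J(x₀) = T(I(x₀)) is an interval of length (2/3)·4^{-m}, namely J(x₀) = [T(x₀), T(x₀) + (2/3)·4^{-m}]. -/

import Mathlib

open Set

/-- `phi x` is the distance from `x` to the nearest integer. -/
noncomputable def phi (x : ℝ) : ℝ := min (Int.fract x) (1 - Int.fract x)

/-- The Takagi function. -/
noncomputable def T (x : ℝ) : ℝ := ∑' n : ℕ, (1/2 : ℝ)^n * phi (2^n * x)

/-- The `j`-th binary digit of `x ∈ [0,1)` (terminating expansion for dyadics). -/
noncomputable def eps (x : ℝ) (j : ℕ) : ℤ := ⌊2^j * x⌋ % 2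

/-- `D k x = ∑_{j=1}^k (-1)^{ε_j(x)}`. -/
noncomputable def D (k : ℕ) (x : ℝ) : ℤ :=
  ∑ j ∈ Finset.Icc 1 k, (-1 : ℤ)^((eps x j).toNat)

/-- `x₀` is a balanced dyadic rational of order `m`. -/
def BalancedDyadic (m : ℕ) (x₀ : ℝ) : Prop :=
  x₀ ∈ Set.Ico (0:ℝ) 1 ∧ (∃ k : ℕ, x₀ = (k : ℝ) / 4^m) ∧ D (2*m) x₀ = 0

/-- The generation of a balanced dyadic rational of order `m`. -/
noncomputable def generation (m : ℕ) (x₀ : ℝ) : ℕ :=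
  ((Finset.Icc 1 (2*m)).filter (fun j => D j x₀ = 0)).card

/-- The local level set of `x`. -/
def LocalLevelSet (x : ℝ) : Set ℝ :=
  {x' ∈ Set.Ico (0:ℝ) 1 | ∀ j : ℕ, |D j x'| = |D j x|}

/-- The level set of `T` at level `y`. -/
def L (y : ℝ) : Set ℝ := {x ∈ Set.Icc (0:ℝ) 1 | T x = y}

/-! Write `x₀ = k/2^n`. For `i < n` the term `φ(2^i x)` of the Takagi series is affine on
`[x₀, x₀ + 2^{-n}]` with slope `±2^i`, the sign being the binary digit `ε_{i+1}(x₀)`, while the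
terms with `i ≥ n` reproduce `T` at scale `2^{-n}` because `φ` is `1`-periodic. Hence
`T(x₀ + t/2^n) = T(x₀) + D_n(x₀) t/2^n + T(t)/2^n` for `t ∈ [0,1]`, and for a balanced `x₀` of order
`m` the image of the hump is the copy `T(x₀) + 4^{-m} T([0,1])`. Finally `T([0,1]) = [0, 2/3]`:
`T(1/3) = 2/3`, and `T ≤ 2/3` because `T y = φ(y) + φ(2y)/2 + T(4y)/4` with `φ(y) + φ(2y)/2 ≤ 1/2`. -/

lemma phi_eq_abs_sub_round (x : ℝ) : phi x = |x - round x| :=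
  (abs_sub_round_eq_min x).symm

lemma phi_nonneg (x : ℝ) : 0 ≤ phi x := by
  rw [phi_eq_abs_sub_round]; exact abs_nonneg _

lemma phi_le_half (x : ℝ) : phi x ≤ 1 / 2 := by
  rw [phi_eq_abs_sub_round]; exact abs_sub_round x

lemma phi_le_abs_sub_intCast (x : ℝ) (n : ℤ) : phi x ≤ |x - n| := by
  rw [phi_eq_abs_sub_round]; exact round_le x n

lemma phi_eq_abs_sub_intCast {x : ℝ} {n : ℤ} (h : |x - n| ≤ 1 / 2) : phi x = |x - n| := by
  refine le_antisymm (phi_le_abs_sub_intCast x n) ?_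
  rw [phi_eq_abs_sub_round]
  rcases eq_or_ne (round x) n with hr | hr
  · rw [hr]
  · have : (1 : ℝ) ≤ |(round x : ℝ) - n| := by
      rw [← Int.cast_sub, ← Int.cast_abs]
      exact_mod_cast Int.one_le_abs (sub_ne_zero.2 hr)
    have := abs_sub_le (round x : ℝ) x n
    rw [abs_sub_comm (round x : ℝ) x] at this
    linarith

lemma phi_intCast_add (n : ℤ) (x : ℝ) : phi (n + x) = phi x := by
  simp only [phi, Int.fract_intCast_add]

lemma continuous_phi : Continuous phi :=
  (continuous_id.min (continuous_const.sub continuous_id)).continuousOn.comp_fract''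
    (by norm_num)

lemma phi_sub_phi_of_mem_Icc (j : ℤ) {z z' : ℝ} (hz : z ∈ Icc (j / 2 : ℝ) ((j + 1) / 2))
    (hz' : z' ∈ Icc (j / 2 : ℝ) ((j + 1) / 2)) :
    phi z' - phi z = (-1) ^ (j % 2).toNat * (z' - z) := by
  obtain ⟨p, rfl | rfl⟩ := Int.even_or_odd' j
  · have hphi : ∀ w ∈ Icc (↑(2 * p) / 2 : ℝ) ((↑(2 * p) + 1) / 2), phi w = w - p := by
      rintro w ⟨hw1, hw2⟩
      push_cast at hw1 hw2
      rw [phi_eq_abs_sub_intCast (n := p) (by rw [abs_le]; constructor <;> linarith),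
        abs_of_nonneg (by linarith)]
    rw [hphi z hz, hphi z' hz', show (2 * p % 2).toNat = 0 by omega]
    ring
  · have hphi : ∀ w ∈ Icc (↑(2 * p + 1) / 2 : ℝ) ((↑(2 * p + 1) + 1) / 2),
        phi w = p + 1 - w := by
      rintro w ⟨hw1, hw2⟩
      push_cast at hw1 hw2
      rw [phi_eq_abs_sub_intCast (n := p + 1) (by push_cast; rw [abs_le]; constructor <;> linarith),
        abs_of_nonpos (by push_cast; linarith)]
      push_cast; ring
    rw [hphi z hz, hphi z' hz', show ((2 * p + 1) % 2).toNat = 1 by omega]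
    ring

lemma phi_two_mul_le (y : ℝ) : phi (2 * y) ≤ 1 - 2 * phi y := by
  have hr := abs_sub_round y
  rw [phi_eq_abs_sub_round y]
  rcases le_total (round y : ℝ) y with h | h
  · have := phi_le_abs_sub_intCast (2 * y) (2 * round y + 1)
    rw [abs_le] at hr
    rw [abs_of_nonneg (by linarith)]
    rw [abs_of_nonpos (by push_cast; linarith)] at this
    push_cast at this; linarith
  · have := phi_le_abs_sub_intCast (2 * y) (2 * round y - 1)
    rw [abs_le] at hr
    rw [abs_of_nonpos (by linarith)]
    rw [abs_of_nonneg (by push_cast; linarith)] at this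
    push_cast at this; linarith

lemma norm_takagi_term_le (n : ℕ) (x : ℝ) : ‖(1 / 2 : ℝ) ^ n * phi (2 ^ n * x)‖ ≤ (1 / 2) ^ n := by
  rw [norm_mul, norm_pow, Real.norm_of_nonneg (phi_nonneg _)]
  have := phi_le_half (2 ^ n * x)
  norm_num
  nlinarith [pow_pos (by norm_num : (0 : ℝ) < 2⁻¹) n]

lemma summable_takagi_term (x : ℝ) : Summable fun n : ℕ => (1 / 2 : ℝ) ^ n * phi (2 ^ n * x) :=
  Summable.of_norm_bounded summable_geometric_two (norm_takagi_term_le · x)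

lemma continuous_T : Continuous T :=
  continuous_tsum (fun _ => continuous_const.mul (continuous_phi.comp (continuous_const_mul _)))
    summable_geometric_two norm_takagi_term_le

lemma T_nonneg (x : ℝ) : 0 ≤ T x :=
  tsum_nonneg fun n => mul_nonneg (by positivity) (phi_nonneg _)

lemma T_le_two (x : ℝ) : T x ≤ 2 := by
  rw [← tsum_geometric_two]
  exact (summable_takagi_term x).tsum_le_tsum
    (fun n => (le_abs_self _).trans (norm_takagi_term_le n x)) summable_geometric_two

lemma T_eq_sum_add (n : ℕ) (x : ℝ) :
    T x = ∑ i ∈ Finset.range n, (1 / 2 : ℝ) ^ i * phi (2 ^ i * x) + T (2 ^ n * x) / 2 ^ n := by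
  rw [T, ← (summable_takagi_term x).sum_add_tsum_nat_add n, T, ← tsum_div_const]
  congr 1
  refine tsum_congr fun i => ?_
  rw [show (2 : ℝ) ^ (i + n) * x = 2 ^ i * (2 ^ n * x) by ring, one_div, inv_pow, inv_pow,
    pow_add, mul_inv]
  ring

lemma T_intCast_add (k : ℤ) (x : ℝ) : T (k + x) = T x := by
  refine tsum_congr fun n => ?_
  rw [mul_add, show (2 : ℝ) ^ n * k = ((2 ^ n * k : ℤ) : ℝ) by push_cast; ring, phi_intCast_add]

lemma T_intCast (k : ℤ) : T k = 0 := by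
  simpa [T, phi] using T_intCast_add k 0

lemma T_le_two_thirds (x : ℝ) : T x ≤ 2 / 3 := by
  have hbdd : BddAbove (range T) := ⟨2, by rintro _ ⟨y, rfl⟩; exact T_le_two y⟩
  set M := ⨆ y, T y
  have hstep : ∀ y, T y ≤ 1 / 2 + M / 4 := by
    intro y
    have hsplit := T_eq_sum_add 2 y
    norm_num [Finset.sum_range_succ] at hsplit
    have := phi_two_mul_le y
    have := le_ciSup hbdd (4 * y)
    linarith
  have hM : M ≤ 1 / 2 + M / 4 := ciSup_le hstep
  linarith [le_ciSup hbdd x]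

lemma T_one_third : T (1 / 3) = 2 / 3 := by
  have hsplit := T_eq_sum_add 2 (1 / 3)
  have h1 : phi (1 / 3) = 1 / 3 := by
    rw [phi_eq_abs_sub_intCast (n := 0)] <;> norm_num [abs_of_pos]
  have h2 : phi (2 / 3) = 1 / 3 := by
    rw [phi_eq_abs_sub_intCast (n := 1)] <;> norm_num [abs_of_neg]
  have h4 : T (2 ^ 2 * (1 / 3)) = T (1 / 3) := by
    rw [show (2 : ℝ) ^ 2 * (1 / 3) = ((1 : ℤ) : ℝ) + 1 / 3 by norm_num, T_intCast_add]
  rw [h4] at hsplit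
  norm_num [Finset.sum_range_succ, h1, h2] at hsplit
  linarith

lemma T_image_Icc_zero_one : T '' Icc 0 1 = Icc 0 (2 / 3) := by
  refine Subset.antisymm ?_ ?_
  · rintro _ ⟨x, -, rfl⟩
    exact ⟨T_nonneg x, T_le_two_thirds x⟩
  · have hIVT := intermediate_value_Icc (by norm_num : (0 : ℝ) ≤ 1 / 3) continuous_T.continuousOn
    have hT0 : T 0 = 0 := by simpa using T_intCast 0
    rw [hT0, T_one_third] at hIVT
    exact hIVT.trans (image_mono (Icc_subset_Icc_right (by norm_num)))

lemma D_eq_sum_range (n : ℕ) (x : ℝ) :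
    D n x = ∑ i ∈ Finset.range n, (-1 : ℤ) ^ (eps x (i + 1)).toNat := by
  rw [D, Finset.range_eq_Ico, Finset.sum_Ico_add' (fun j => (-1 : ℤ) ^ (eps x j).toNat), zero_add,
    Finset.Ico_add_one_right_eq_Icc]

lemma intCast_add_one_div_le_floor_add_one (k : ℤ) {N : ℕ} (hN : 0 < N) :
    ((k : ℝ) + 1) / N ≤ ⌊(k : ℝ) / N⌋ + 1 := by
  have hNpos : (0 : ℝ) < N := by exact_mod_cast hN
  have hlt : (k : ℝ) < N * (⌊(k : ℝ) / N⌋ + 1) := by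
    rw [← div_lt_iff₀' hNpos]; exact Int.lt_floor_add_one _
  have hle : (k : ℝ) + 1 ≤ N * (⌊(k : ℝ) / N⌋ + 1) := by
    exact_mod_cast Int.add_one_le_of_lt (by exact_mod_cast hlt)
  rwa [div_le_iff₀' hNpos]

/-- Both points lie in `[j/2, (j+1)/2]` for `j = ⌊2^(i+1) k / 2^n⌋`, because `2^(i+1) k / 2^n` lies
on the grid `2^(i+1-n) ℤ` and `t/2^n` is at most one grid step. -/
lemma phi_two_pow_mul_dyadic_add_sub (k : ℤ) {i n : ℕ} (hi : i < n) {t : ℝ} (ht0 : 0 ≤ t)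
    (ht1 : t ≤ 1) :
    phi (2 ^ i * (k / 2 ^ n + t / 2 ^ n)) - phi (2 ^ i * (k / 2 ^ n)) =
      (-1) ^ (eps (k / 2 ^ n) (i + 1)).toNat * (2 ^ i * t / 2 ^ n) := by
  obtain ⟨q, rfl⟩ : ∃ q, n = i + 1 + q := ⟨n - (i + 1), by omega⟩
  set y : ℝ := k / 2 ^ q with hy
  set s : ℝ := t / 2 ^ q with hs
  have h2 : (2 : ℝ) ^ (i + 1 + q) = 2 * 2 ^ i * 2 ^ q := by ring
  have hz : 2 ^ i * ((k : ℝ) / 2 ^ (i + 1 + q)) = y / 2 := by rw [h2, hy]; field_simp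
  have hz' : 2 ^ i * ((k : ℝ) / 2 ^ (i + 1 + q) + t / 2 ^ (i + 1 + q)) = (y + s) / 2 := by
    rw [h2, hy, hs]; field_simp
  have hu : 2 ^ i * t / 2 ^ (i + 1 + q) = s / 2 := by rw [h2, hs]; field_simp
  have hdigit : eps ((k : ℝ) / 2 ^ (i + 1 + q)) (i + 1) = ⌊y⌋ % 2 := by
    rw [eps, show (2 : ℝ) ^ (i + 1) * (k / 2 ^ (i + 1 + q)) = y by rw [h2, hy]; field_simp; ring]
  have hs0 : 0 ≤ s := by positivity
  have hgrid : y + s ≤ ⌊y⌋ + 1 := by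
    have hk := intCast_add_one_div_le_floor_add_one k (N := 2 ^ q) (by positivity)
    have hs1 : s ≤ 1 / 2 ^ q := div_le_div_of_nonneg_right ht1 (by positivity)
    push_cast at hk
    rw [add_div] at hk
    linarith
  have hfloor := Int.floor_le y
  rw [hz, hz', hu, hdigit, phi_sub_phi_of_mem_Icc ⌊y⌋
    ⟨by linarith, by linarith [Int.lt_floor_add_one y]⟩ ⟨by linarith, by linarith⟩]
  ring

lemma T_dyadic_add (k : ℤ) (n : ℕ) {t : ℝ} (ht0 : 0 ≤ t) (ht1 : t ≤ 1) :
    T (k / 2 ^ n + t / 2 ^ n) = T (k / 2 ^ n) + D n (k / 2 ^ n) * t / 2 ^ n + T t / 2 ^ n := by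
  have hterm : ∀ i ∈ Finset.range n,
      (1 / 2 : ℝ) ^ i * phi (2 ^ i * (k / 2 ^ n + t / 2 ^ n)) =
        (1 / 2) ^ i * phi (2 ^ i * (k / 2 ^ n)) +
          (-1) ^ (eps (k / 2 ^ n) (i + 1)).toNat * t / 2 ^ n := by
    intro i hi
    have hslope := phi_two_pow_mul_dyadic_add_sub k (Finset.mem_range.1 hi) ht0 ht1
    have hinv : (1 / 2 : ℝ) ^ i * 2 ^ i = 1 := by rw [← mul_pow]; norm_num
    linear_combination (1 / 2 : ℝ) ^ i * hslope +
      (-1 : ℝ) ^ (eps (k / 2 ^ n) (i + 1)).toNat * t / 2 ^ n * hinv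
  have hshift : (2 : ℝ) ^ n * (k / 2 ^ n + t / 2 ^ n) = k + t := by field_simp
  have hshift₀ : (2 : ℝ) ^ n * (k / 2 ^ n) = k := by field_simp
  rw [T_eq_sum_add n, T_eq_sum_add n (k / 2 ^ n), hshift, hshift₀, T_intCast_add, T_intCast,
    Finset.sum_congr rfl hterm, Finset.sum_add_distrib, D_eq_sum_range]
  push_cast
  rw [Finset.sum_mul, Finset.sum_div]
  ring

theorem takagi_hump_image (m : ℕ) (x₀ : ℝ) (h : BalancedDyadic m x₀) :
    T '' Set.Icc x₀ (x₀ + 1/4^m) = Set.Icc (T x₀) (T x₀ + (2/3) * (1/4^m)) := by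
  obtain ⟨-, ⟨k, rfl⟩, hD⟩ := h
  have h4 : (4 : ℝ) ^ m = 2 ^ (2 * m) := by rw [pow_mul]; norm_num
  have hpos : (0 : ℝ) < 1 / 4 ^ m := by positivity
  have hself : EqOn (T ∘ fun t => 1 / 4 ^ m * t + k / 4 ^ m)
      ((fun s => 1 / 4 ^ m * s + T (k / 4 ^ m)) ∘ T) (Icc 0 1) := by
    rintro t ⟨ht0, ht1⟩
    have hT := T_dyadic_add k (2 * m) ht0 ht1
    push_cast at hT
    rw [← h4, hD, Int.cast_zero, zero_mul, zero_div, add_zero] at hT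
    simp only [Function.comp_apply]
    rw [show 1 / 4 ^ m * t + k / 4 ^ m = k / 4 ^ m + t / 4 ^ m by ring, hT]
    ring
  calc T '' Icc (k / 4 ^ m) (k / 4 ^ m + 1 / 4 ^ m)
      = T '' ((fun t => 1 / 4 ^ m * t + k / 4 ^ m) '' Icc 0 1) := by
        rw [image_affine_Icc' hpos]; congr 2 <;> ring
    _ = (fun s => 1 / 4 ^ m * s + T (k / 4 ^ m)) '' (T '' Icc 0 1) := by
        rw [← image_comp, hself.image_eq, image_comp]
    _ = Icc (T (k / 4 ^ m)) (T (k / 4 ^ m) + 2 / 3 * (1 / 4 ^ m)) := by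
        rw [T_image_Icc_zero_one, image_affine_Icc' hpos]; congr 1 <;> ring
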